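/- arXiv:1909.03152 — 2 statements merged into one kernel-verified Lean document; each statement's English description precedes it below -/
import Mathlib

section
/- The graph G' output by the greedy (2k-1)-spanner algorithm (with edges sorted in nondecreasing weight order) has girth greater than 2k; that is, G' contains no cycle with at most 2k edges. -/
open scoped ENNReal Classical

variable {V : Type*}

/-- The total weight of a walk: the sum of the weights of its (directed) edges. -/
noncomputable def walkWeight (w : V → V → ℝ≥0∞) {G : SimpleGraph V} {u v : V}
    (p : G.Walk u v) : ℝ≥0∞ :=
  (p.darts.map (fun d => w d.toProd.1 d.toProd.2)).sum

/-- Weighted shortest-path distance: the infimum of walk weights (`⊤` if unreachable). -/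
noncomputable def wdist (G : SimpleGraph V) (w : V → V → ℝ≥0∞) (u v : V) : ℝ≥0∞ :=
  ⨅ p : G.Walk u v, walkWeight w p

/-- One greedy pass: process the edges in the given list order, adding an edge whenever the
current spanner distance between its endpoints exceeds `t` times its weight. -/
noncomputable def greedyAux (w : V → V → ℝ≥0∞) (t : ℝ≥0∞) :
    List (V × V) → SimpleGraph V → SimpleGraph V
  | [], G' => G'
  | e :: rest, G' =>
      greedyAux w t rest
        (if t * w e.1 e.2 < wdist G' w e.1 e.2
          then G' ⊔ SimpleGraph.fromEdgeSet {s(e.1, e.2)} else G')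
/-! Since the edges come in nondecreasing order of weight, when the greedy rule adds `uv` every
edge already chosen weighs at most `w u v`. A cycle of at most `t + 1` edges through `uv` would
leave a `u`-`v` walk of at most `t` chosen edges, of weight at most `t * w u v`, and the rule would
have rejected `uv`. So girth at least `t + 2` is preserved, which for `t = 2k - 1` is the claim. -/

open SimpleGraph

lemma wdist_le_walkWeight {G : SimpleGraph V} (w : V → V → ℝ≥0∞) {u v : V} (p : G.Walk u v) :
    wdist G w u v ≤ walkWeight w p :=
  iInf_le _ p

@[simp]
lemma walkWeight_transfer {G H : SimpleGraph V} (w : V → V → ℝ≥0∞) {u v : V} (p : G.Walk u v)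
    (hp : ∀ e ∈ p.edges, e ∈ H.edgeSet) :
    walkWeight w (p.transfer H hp) = walkWeight w p := by
  induction p with
  | nil => rfl
  | cons h q ih =>
    simp only [Walk.transfer, walkWeight, Walk.darts_cons, List.map_cons, List.sum_cons] at ih ⊢
    exact congrArg (w _ _ + ·) (ih _)

lemma walkWeight_le_length_mul {G : SimpleGraph V} {w : V → V → ℝ≥0∞} {W : ℝ≥0∞}
    (hW : ∀ a b, G.Adj a b → w a b ≤ W) {u v : V} (p : G.Walk u v) :
    walkWeight w p ≤ p.length * W := by
  calc walkWeight w p ≤ (p.darts.map fun d => w d.toProd.1 d.toProd.2).length • W :=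
        List.sum_le_card_nsmul _ _ (by simpa using fun d _ => hW _ _ d.adj)
    _ = p.length * W := by simp [nsmul_eq_mul]

namespace SimpleGraph.Walk

lemma IsTrail.exists_walk_notMem_edges {G : SimpleGraph V} {a u v : V} {c : G.Walk a a}
    (hc : c.IsTrail) (he : s(u, v) ∈ c.edges) :
    ∃ q : G.Walk u v, s(u, v) ∉ q.edges ∧ q.length < c.length := by
  have hu : u ∈ c.support := c.fst_mem_support_of_mem_edges he
  set c' := c.rotate u hu
  have he' : s(u, v) ∈ c'.edges := (c.rotate_edges u hu).perm.mem_iff.2 he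
  have hv : v ∈ c'.support := c'.snd_mem_support_of_mem_edges he'
  have hdisj := (hc.rotate hu).disjoint_edges_takeUntil_dropUntil hv
  have hlen : (c'.takeUntil v hv).length + (c'.dropUntil v hv).length = c.length := by
    rw [← length_append, take_spec, length_rotate]
  rw [← take_spec c' hv, edges_append, List.mem_append] at he'
  rcases he' with h₁ | h₂
  · have := List.length_pos_of_mem h₁
    refine ⟨(c'.dropUntil v hv).reverse, by simpa using hdisj h₁, ?_⟩
    simp only [length_edges] at this
    simp only [length_reverse]
    omega
  · have := List.length_pos_of_mem h₂
    refine ⟨c'.takeUntil v hv, fun h₁ => hdisj h₁ h₂, ?_⟩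
    simp only [length_edges] at this
    omega

lemma mem_edgeSet_of_notMem_sup_edge {G : SimpleGraph V} {u v x y : V}
    (p : (G ⊔ edge u v).Walk x y) (hp : s(u, v) ∉ p.edges) : ∀ e ∈ p.edges, e ∈ G.edgeSet := by
  intro e he
  have he' := p.edges_subset_edgeSet he
  rw [edgeSet_sup, edgeSet_edge] at he'
  rcases he' with hG | ⟨huv, -⟩
  · exact hG
  · exact absurd (Set.mem_singleton_iff.1 huv ▸ he) hp

end SimpleGraph.Walk

lemma le_egirth_sup_edge {G : SimpleGraph V} {w : V → V → ℝ≥0∞} {t : ℕ} {u v : V}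
    (hG : ((t + 2 : ℕ) : ℕ∞) ≤ G.egirth) (hw : ∀ a b, G.Adj a b → w a b ≤ w u v)
    (hfar : t * w u v < wdist G w u v) :
    ((t + 2 : ℕ) : ℕ∞) ≤ (G ⊔ edge u v).egirth := by
  rw [le_egirth] at hG ⊢
  intro a c hc
  by_cases he : s(u, v) ∈ c.edges
  · obtain ⟨q, hq, hqlen⟩ := hc.isTrail.exists_walk_notMem_edges he
    by_contra! hshort
    have hqt : q.length ≤ t := by norm_cast at hshort; omega
    set q' := q.transfer G (q.mem_edgeSet_of_notMem_sup_edge hq)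
    have : wdist G w u v ≤ t * w u v := calc
      wdist G w u v ≤ walkWeight w q' := wdist_le_walkWeight w q'
      _ ≤ q'.length * w u v := walkWeight_le_length_mul hw q'
      _ ≤ t * w u v := by gcongr; simpa [q'] using hqt
    exact (hfar.trans_le this).false
  · simpa using hG a _ (hc.transfer (c.mem_edgeSet_of_notMem_sup_edge he))

lemma le_egirth_greedyAux {w : V → V → ℝ≥0∞} (hsymm : ∀ u v, w u v = w v u) {t : ℕ}
    (l : List (V × V)) (hsorted : (l.map fun e => w e.1 e.2).Pairwise (· ≤ ·))
    (G : SimpleGraph V) (hG : ((t + 2 : ℕ) : ℕ∞) ≤ G.egirth)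
    (hw : ∀ a b, G.Adj a b → ∀ e ∈ l, w a b ≤ w e.1 e.2) :
    ((t + 2 : ℕ) : ℕ∞) ≤ (greedyAux w t l G).egirth := by
  induction l generalizing G with
  | nil => exact hG
  | cons e rest ih =>
    obtain ⟨u, v⟩ := e
    rw [List.map_cons, List.pairwise_cons] at hsorted
    rw [greedyAux]
    split_ifs with hfar
    · refine ih hsorted.2 _
        (le_egirth_sup_edge hG (fun a b h => hw a b h _ List.mem_cons_self) hfar) ?_
      intro a b hab f hf
      rw [sup_adj, ← edge, edge_adj] at hab
      rcases hab with hab | ⟨⟨rfl, rfl⟩ | ⟨rfl, rfl⟩, -⟩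
      · exact hw a b hab f (List.mem_cons_of_mem _ hf)
      · exact hsorted.1 _ (List.mem_map_of_mem hf)
      · exact hsymm a b ▸ hsorted.1 _ (List.mem_map_of_mem hf)
    · exact ih hsorted.2 G hG fun a b hab f hf => hw a b hab f (List.mem_cons_of_mem _ hf)

theorem greedy_girth_general
    (w : V → V → ℝ≥0∞) (hsymm : ∀ u v, w u v = w v u)
    (k : ℕ)
    (l : List (V × V))
    (hsorted : (l.map (fun e => w e.1 e.2)).Pairwise (· ≤ ·)) :
    (2 * k : ℕ∞) < (greedyAux w ((2 * k - 1 : ℕ) : ℝ≥0∞) l ⊥).egirth := by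
  have hgirth := le_egirth_greedyAux hsymm (t := 2 * k - 1) l hsorted ⊥ (by simp)
    fun a b hab => ((bot_adj a b).1 hab).elim
  refine lt_of_lt_of_le ?_ hgirth
  exact_mod_cast (by omega : 2 * k < 2 * k - 1 + 2)

/-- The graph output by the greedy `(2k-1)`-spanner algorithm, with the edges processed in
nondecreasing order of weight, has girth greater than `2k`: it contains no cycle with at
most `2k` edges. -/
theorem greedy_girth [Fintype V]
    (G : SimpleGraph V) (hconn : G.Connected)
    (w : V → V → ℝ≥0∞) (hsymm : ∀ u v, w u v = w v u)
    (hpos : ∀ u v, G.Adj u v → 0 < w u v) (hfin : ∀ u v, G.Adj u v → w u v ≠ ⊤)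
    (k : ℕ) (hk : 1 ≤ k)
    (l : List (V × V))
    (hl₁ : ∀ e ∈ l, G.Adj e.1 e.2)
    (hl₂ : ∀ u v : V, G.Adj u v → (u, v) ∈ l ∨ (v, u) ∈ l)
    (hsorted : (l.map (fun e => w e.1 e.2)).Pairwise (· ≤ ·)) :
    (2 * k : ℕ∞) < (greedyAux w ((2 * k - 1 : ℕ) : ℝ≥0∞) l ⊥).egirth :=
  greedy_girth_general w hsymm k l hsorted
end

section
/- Every graph G has a 'consistent tiebreaking' scheme: a map π assigning to each ordered pair (u,v) of vertices a shortest u-v path such that whenever x and y both lie on π(w,z) (with x preceding y), the subpath of π(w,z) from x to y equals π(x,y). -/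
/-!
Fix a linear order on the vertices and order the walks between two vertices by weight, then
length, then lexicographically by support; let `π u v` be the least walk from `u` to `v`. It
exists because there are finitely many paths and bypassing a non-path strictly decreases the key.
With finite edge weights this order is strictly compatible with splicing: replacing a subwalk by a
smaller walk with the same ends yields a smaller walk. So every subwalk of a least walk is least,
and least walks are unique since a walk is determined by its support.
-/

open scoped ENNReal Classical

variable {V : Type*}

open SimpleGraph

lemma List.append_lt_append_right_of_length_eq {α : Type*} [LT α] {l₁ l₂ : List α}
    (h : l₁ < l₂) (hlen : l₁.length = l₂.length) (t : List α) : l₁ ++ t < l₂ ++ t := by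
  induction h with
  | nil => simp at hlen
  | rel hab => exact List.Lex.rel hab
  | cons _ ih => exact List.Lex.cons (ih (by simpa using hlen))

section Tiebreak

variable {G : SimpleGraph V} (w : V → V → ℝ≥0∞)

@[simp] lemma walkWeight_nil {u : V} : walkWeight w (Walk.nil : G.Walk u u) = 0 := by
  simp [walkWeight]

@[simp] lemma walkWeight_cons {u v x : V} (h : G.Adj u v) (p : G.Walk v x) :
    walkWeight w (Walk.cons h p) = w u v + walkWeight w p := by
  simp [walkWeight]

lemma walkWeight_append {u v x : V} (p : G.Walk u v) (q : G.Walk v x) :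
    walkWeight w (p.append q) = walkWeight w p + walkWeight w q := by
  simp [walkWeight, Walk.darts_append]

lemma walkWeight_ne_top (hfin : ∀ u v, G.Adj u v → w u v ≠ ⊤) {u v : V} (p : G.Walk u v) :
    walkWeight w p ≠ ⊤ := by
  induction p with
  | nil => simp
  | cons h p ih => simp [hfin _ _ h, ih]

lemma walkWeight_bypass_le [DecidableEq V] {u v : V} (p : G.Walk u v) :
    walkWeight w p.bypass ≤ walkWeight w p :=
  (p.darts_bypass_sublist_darts.map _).sum_le_sum fun _ _ => zero_le

/-- Comparing lengths before supports makes the order on supports compatible with appending a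
common suffix, which plain lexicographic order is not. -/
noncomputable def tiebreakKey {u v : V} (p : G.Walk u v) : ℝ≥0∞ ×ₗ (ℕ ×ₗ List V) :=
  toLex (walkWeight w p, toLex (p.length, p.support))

lemma tiebreakKey_injective {u v : V} : Function.Injective (tiebreakKey w : G.Walk u v → _) :=
  fun _ _ h => Walk.ext_support (by simp_all [tiebreakKey])

variable [LinearOrder V]

lemma walkWeight_le_of_tiebreakKey_le {u v : V} {p q : G.Walk u v}
    (h : tiebreakKey w p ≤ tiebreakKey w q) : walkWeight w p ≤ walkWeight w q :=
  Prod.Lex.monotone_fst _ _ h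

lemma tiebreakKey_bypass_lt {u v : V} {p : G.Walk u v} (hp : ¬ p.IsPath) :
    tiebreakKey w p.bypass < tiebreakKey w p := by
  have hlen : p.bypass.length < p.length := by
    by_contra! h
    exact hp (p.bypass_eq_self_of_length_le_length_bypass h ▸ p.bypass_isPath)
  simp only [tiebreakKey, Prod.Lex.toLex_lt_toLex]
  rcases (walkWeight_bypass_le w p).lt_or_eq with hW | hW
  · exact .inl hW
  · exact .inr ⟨hW, .inl hlen⟩

lemma tiebreakKey_append_lt_append_left {u v x : V} (p : G.Walk u v)
    (hp : walkWeight w p ≠ ⊤) {q r : G.Walk v x} (h : tiebreakKey w q < tiebreakKey w r) :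
    tiebreakKey w (p.append q) < tiebreakKey w (p.append r) := by
  simp only [tiebreakKey, Prod.Lex.toLex_lt_toLex, walkWeight_append, Walk.length_append,
    Walk.support_append_eq_support_dropLast_append] at h ⊢
  rcases h with hW | ⟨hW, hL | ⟨hL, hS⟩⟩
  · exact .inl (ENNReal.add_lt_add_left hp hW)
  · exact .inr ⟨by rw [hW], .inl (by omega)⟩
  · exact .inr ⟨by rw [hW], .inr ⟨by rw [hL], List.append_left_lt hS⟩⟩

lemma tiebreakKey_append_lt_append_right {u v x : V} (p : G.Walk v x)
    (hp : walkWeight w p ≠ ⊤) {q r : G.Walk u v} (h : tiebreakKey w q < tiebreakKey w r) :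
    tiebreakKey w (q.append p) < tiebreakKey w (r.append p) := by
  simp only [tiebreakKey, Prod.Lex.toLex_lt_toLex, walkWeight_append, Walk.length_append,
    Walk.support_append] at h ⊢
  rcases h with hW | ⟨hW, hL | ⟨hL, hS⟩⟩
  · exact .inl (ENNReal.add_lt_add_right hp hW)
  · exact .inr ⟨by rw [hW], .inl (by omega)⟩
  · refine .inr ⟨by rw [hW], .inr ⟨by rw [hL], ?_⟩⟩
    exact List.append_lt_append_right_of_length_eq hS (by simp [hL]) _

def IsTiebreakMin {u v : V} (p : G.Walk u v) : Prop :=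
  ∀ q : G.Walk u v, tiebreakKey w p ≤ tiebreakKey w q

lemma exists_isPath_isTiebreakMin [Fintype V] {u v : V} (h : G.Reachable u v) :
    ∃ p : G.Walk u v, p.IsPath ∧ IsTiebreakMin w p := by
  obtain ⟨p₀⟩ := h
  obtain ⟨⟨p, hp⟩, -, hmin⟩ := Finset.exists_min_image Finset.univ
    (fun p : G.Path u v => tiebreakKey w p.1) ⟨⟨p₀.bypass, p₀.bypass_isPath⟩, Finset.mem_univ _⟩
  refine ⟨p, hp, fun q => ?_⟩
  by_cases hq : q.IsPath
  · exact hmin ⟨q, hq⟩ (Finset.mem_univ _)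
  · exact (hmin ⟨_, q.bypass_isPath⟩ (Finset.mem_univ _)).trans (tiebreakKey_bypass_lt w hq).le

namespace IsTiebreakMin

variable {w}

lemma walkWeight_eq_wdist {u v : V} {p : G.Walk u v} (hp : IsTiebreakMin w p) :
    walkWeight w p = wdist G w u v :=
  le_antisymm (le_iInf fun q => walkWeight_le_of_tiebreakKey_le w (hp q)) (iInf_le _ _)

lemma eq {u v : V} {p q : G.Walk u v} (hp : IsTiebreakMin w p) (hq : IsTiebreakMin w q) :
    p = q :=
  tiebreakKey_injective w ((hp q).antisymm (hq p))

lemma of_append {a x y b : V} {q₁ : G.Walk a x} {q₂ : G.Walk x y} {q₃ : G.Walk y b}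
    (h : IsTiebreakMin w (q₁.append (q₂.append q₃)))
    (hfin : walkWeight w (q₁.append (q₂.append q₃)) ≠ ⊤) : IsTiebreakMin w q₂ := by
  rw [walkWeight_append, walkWeight_append, ENNReal.add_ne_top, ENNReal.add_ne_top] at hfin
  intro r
  by_contra! hr
  exact (h _).not_gt <| tiebreakKey_append_lt_append_left w q₁ hfin.1 <|
    tiebreakKey_append_lt_append_right w q₃ hfin.2.2 hr

end IsTiebreakMin

end Tiebreak

theorem exists_consistent_tiebreaking_general [Fintype V]
    (G : SimpleGraph V) (hconn : G.Connected)
    (w : V → V → ℝ≥0∞) (hfin : ∀ u v, G.Adj u v → w u v ≠ ⊤) :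
    ∃ π : ∀ u v : V, G.Walk u v,
      (∀ u v : V, (π u v).IsPath ∧ walkWeight w (π u v) = wdist G w u v) ∧
      (∀ (a b x y : V) (q₁ : G.Walk a x) (q₂ : G.Walk x y) (q₃ : G.Walk y b),
        π a b = q₁.append (q₂.append q₃) → q₂ = π x y) := by
  let : LinearOrder V := LinearOrder.lift' _ (Fintype.equivFin V).injective
  choose π hπpath hπmin using fun u v => exists_isPath_isTiebreakMin w (hconn.preconnected u v)
  refine ⟨π, fun u v => ⟨hπpath u v, (hπmin u v).walkWeight_eq_wdist⟩, ?_⟩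
  intro a b x y q₁ q₂ q₃ h
  have hmin := hπmin a b
  rw [h] at hmin
  exact hmin.of_append (h ▸ walkWeight_ne_top w hfin _) |>.eq (hπmin x y)

/-- Every (connected, weighted) graph has a consistent tiebreaking scheme: an assignment
`π` of a shortest path to each ordered pair of vertices such that every subpath of a
chosen shortest path is itself the chosen shortest path between its endpoints. -/
theorem exists_consistent_tiebreaking [Fintype V]
    (G : SimpleGraph V) (hconn : G.Connected)
    (w : V → V → ℝ≥0∞) (hsymm : ∀ u v, w u v = w v u)
    (hpos : ∀ u v, G.Adj u v → 0 < w u v) (hfin : ∀ u v, G.Adj u v → w u v ≠ ⊤) :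
    ∃ π : ∀ u v : V, G.Walk u v,
      (∀ u v : V, (π u v).IsPath ∧ walkWeight w (π u v) = wdist G w u v) ∧
      (∀ (a b x y : V) (q₁ : G.Walk a x) (q₂ : G.Walk x y) (q₃ : G.Walk y b),
        π a b = q₁.append (q₂.append q₃) → q₂ = π x y) :=
  exists_consistent_tiebreaking_general G hconn w hfin
end
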